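/- For every B ≥ R(σ2²+σ1²)/(σ2²−σ1²): max_{|z| ≤ B} |h̆(z)| ≥ (c1 B − c2 R) · exp(−(B+R)²/(2σ1²))/√(2πσ1²), where c1 = 1 − σ1²/σ2² and c2 = 1 + σ1²/σ2²; in particular the left-hand side is strictly positive whenever B > R(σ2²+σ1²)/(σ2²−σ1²). -/

import Mathlib

open MeasureTheory Real Filter

noncomputable section

/-- The real `N(0,σ²)` density `φ_σ`. -/
def phiR (σ u : ℝ) : ℝ := (Real.sqrt (2 * π * σ ^ 2))⁻¹ * Real.exp (-u ^ 2 / (2 * σ ^ 2))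

/-- Complex extension of the Gaussian density `φ_σ`. -/
def phiC (σ : ℝ) (z : ℂ) : ℂ :=
  ((Real.sqrt (2 * π * σ ^ 2) : ℝ) : ℂ)⁻¹ * Complex.exp (-z ^ 2 / (2 * (σ : ℂ) ^ 2))

/-- The entire function `F_i(z) = E[φ_{σ_i}(z − X)]`, with `X ∼ μ`. -/
def Fdens (σ : ℝ) (μ : Measure ℝ) (z : ℂ) : ℂ := ∫ x : ℝ, phiC σ (z - (x : ℂ)) ∂μ

/-- The complex extension `h̆` of the function `h = σ1² f_{Y₁} g'`:
`h̆(z) = σ1² F₁(z)·E[N Log F₂(z+N)]/(σ2²−σ1²) − E[X φ_{σ1}(z−X)] + z F₁(z)`,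
with `N ∼ N(0,σ2²−σ1²)` written out as an integral against its density. -/
def hbreve (σ1 σ2 : ℝ) (μ : Measure ℝ) (z : ℂ) : ℂ :=
  ((σ1 : ℂ) ^ 2 * Fdens σ1 μ z *
      ∫ t : ℝ, (t : ℂ) * Complex.log (Fdens σ2 μ (z + (t : ℂ))) *
        ((phiR (Real.sqrt (σ2 ^ 2 - σ1 ^ 2)) t : ℝ) : ℂ)) /
    ((σ2 : ℂ) ^ 2 - (σ1 : ℂ) ^ 2)
  - (∫ x : ℝ, (x : ℂ) * phiC σ1 (z - (x : ℂ)) ∂μ) + z * Fdens σ1 μ z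

end

/-!
At the real point `z = B` everything is real. For `x ≥ -R` the exponent
`(y + R)² - (y - x)² = (x + R)(2y + R - x)` is nondecreasing in `y`, so
`M(y) = log F₂(y) + (y + R)²/(2σ₂²)` is nondecreasing and `N (M(B + N) - M(B)) ≥ 0`.
Taking expectations over `N ∼ N(0, σ₂² - σ₁²)`, whose odd moments vanish, gives
`E[N log F₂(B + N)] ≥ -(B + R)(σ₂² - σ₁²)/σ₂²`. Hence `h̆(B) ≥ E[(a - X) φ_{σ₁}(B - X)]` with
`a = B - σ₁²(B + R)/σ₂²`, where `a - X ≥ a - R = c₁B - c₂R ≥ 0` and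
`φ_{σ₁}(B - X) ≥ φ_{σ₁}(B + R)`.
-/

open ProbabilityTheory
open scoped NNReal

lemma phiR_nonneg (σ u : ℝ) : 0 ≤ phiR σ u := by
  unfold phiR; positivity

lemma phiR_pos {σ : ℝ} (hσ : σ ≠ 0) (u : ℝ) : 0 < phiR σ u := by
  unfold phiR; positivity

lemma phiR_le_phiR_of_abs_le {σ u w : ℝ} (h : |u| ≤ |w|) : phiR σ w ≤ phiR σ u := by
  have := sq_le_sq.mpr h
  unfold phiR
  gcongr

@[fun_prop]
lemma continuous_phiR (σ : ℝ) : Continuous (phiR σ) := by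
  unfold phiR; fun_prop

lemma log_phiR {σ : ℝ} (hσ : σ ≠ 0) (u : ℝ) :
    Real.log (phiR σ u) = Real.log (phiR σ 0) - u ^ 2 / (2 * σ ^ 2) := by
  have hc : (Real.sqrt (2 * π * σ ^ 2))⁻¹ ≠ 0 := by positivity
  simp only [phiR, Real.log_mul hc (Real.exp_ne_zero _), Real.log_exp]
  ring

lemma phiC_ofReal (σ r : ℝ) : phiC σ r = phiR σ r := by
  unfold phiC phiR
  push_cast
  ring_nf

lemma phiR_sub_mul_exp (σ R x y : ℝ) :
    phiR σ (y - x) * Real.exp ((y + R) ^ 2 / (2 * σ ^ 2)) =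
      phiR σ 0 * Real.exp ((x + R) * (2 * y + R - x) / (2 * σ ^ 2)) := by
  simp only [phiR, mul_assoc, ← Real.exp_add, ← add_div]
  ring_nf

noncomputable def FdensReal (σ : ℝ) (μ : Measure ℝ) (y : ℝ) : ℝ := ∫ x, phiR σ (y - x) ∂μ

lemma Fdens_ofReal (σ : ℝ) (μ : Measure ℝ) (y : ℝ) : Fdens σ μ y = FdensReal σ μ y := by
  simp_rw [Fdens, FdensReal, ← Complex.ofReal_sub, phiC_ofReal]
  exact integral_ofReal

section Convolution

variable {σ R : ℝ} {μ : Measure ℝ}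

lemma integrable_phiR_sub [IsFiniteMeasure μ] (σ y : ℝ) :
    Integrable (fun x => phiR σ (y - x)) μ :=
  .of_bound (by fun_prop) (phiR σ 0) <| ae_of_all _ fun x => by
    rw [Real.norm_of_nonneg (phiR_nonneg σ _)]
    exact phiR_le_phiR_of_abs_le (by simp)

lemma integrable_mul_phiR_sub [IsFiniteMeasure μ] (hsupp : ∀ᵐ x ∂μ, |x| ≤ R) (σ y : ℝ) :
    Integrable (fun x => x * phiR σ (y - x)) μ :=
  .of_bound (by fun_prop) (R * phiR σ 0) <| by
    filter_upwards [hsupp] with x hx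
    rw [norm_mul, Real.norm_eq_abs, Real.norm_of_nonneg (phiR_nonneg σ _)]
    exact mul_le_mul hx (phiR_le_phiR_of_abs_le (by simp)) (phiR_nonneg σ _)
      ((abs_nonneg x).trans hx)

lemma phiR_add_le_phiR_sub {x : ℝ} (hx : |x| ≤ R) (y : ℝ) :
    phiR σ (|y| + R) ≤ phiR σ (y - x) :=
  phiR_le_phiR_of_abs_le <| (abs_sub y x).trans (by gcongr) |>.trans (le_abs_self _)

variable [IsProbabilityMeasure μ]

lemma phiR_le_FdensReal (hsupp : ∀ᵐ x ∂μ, |x| ≤ R) (y : ℝ) :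
    phiR σ (|y| + R) ≤ FdensReal σ μ y := by
  calc phiR σ (|y| + R) = ∫ _, phiR σ (|y| + R) ∂μ := by simp
    _ ≤ FdensReal σ μ y := integral_mono_ae (integrable_const _) (integrable_phiR_sub σ y) <| by
      filter_upwards [hsupp] with x hx using phiR_add_le_phiR_sub hx y

lemma FdensReal_le_phiR_zero (y : ℝ) : FdensReal σ μ y ≤ phiR σ 0 := by
  calc FdensReal σ μ y ≤ ∫ _, phiR σ 0 ∂μ :=
        integral_mono (integrable_phiR_sub σ y) (integrable_const _)
          fun x => phiR_le_phiR_of_abs_le (by simp)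
    _ = phiR σ 0 := by simp

lemma FdensReal_pos (hσ : σ ≠ 0) (hsupp : ∀ᵐ x ∂μ, |x| ≤ R) (y : ℝ) : 0 < FdensReal σ μ y :=
  (phiR_pos hσ _).trans_le (phiR_le_FdensReal hsupp y)

lemma abs_log_FdensReal_le (hσ : σ ≠ 0) (hsupp : ∀ᵐ x ∂μ, |x| ≤ R) (y : ℝ) :
    |Real.log (FdensReal σ μ y)| ≤ |Real.log (phiR σ 0)| + (|y| + R) ^ 2 / (2 * σ ^ 2) := by
  have hF := FdensReal_pos hσ hsupp y
  have hupper := Real.log_le_log hF (FdensReal_le_phiR_zero (μ := μ) y)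
  have hlower := Real.log_le_log (phiR_pos hσ _) (phiR_le_FdensReal hsupp y)
  rw [log_phiR hσ] at hlower
  have : 0 ≤ (|y| + R) ^ 2 / (2 * σ ^ 2) := by positivity
  rw [abs_le]
  constructor <;> linarith [neg_abs_le (Real.log (phiR σ 0)), le_abs_self (Real.log (phiR σ 0))]

lemma monotone_log_FdensReal_add_sq (hσ : σ ≠ 0) (hsupp : ∀ᵐ x ∂μ, |x| ≤ R) :
    Monotone fun y => Real.log (FdensReal σ μ y) + (y + R) ^ 2 / (2 * σ ^ 2) := by
  intro y y' hy
  have hmul : FdensReal σ μ y * Real.exp ((y + R) ^ 2 / (2 * σ ^ 2)) ≤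
      FdensReal σ μ y' * Real.exp ((y' + R) ^ 2 / (2 * σ ^ 2)) := by
    simp only [FdensReal, ← integral_mul_const, phiR_sub_mul_exp]
    refine integral_mono_ae ?_ ?_ ?_
    · exact ((integrable_phiR_sub σ y).mul_const _).congr
        (ae_of_all _ fun x => phiR_sub_mul_exp σ R x y)
    · exact ((integrable_phiR_sub σ y').mul_const _).congr
        (ae_of_all _ fun x => phiR_sub_mul_exp σ R x y')
    · filter_upwards [hsupp] with x hx
      have hxR : 0 ≤ x + R := by linarith [neg_le_of_abs_le hx]
      gcongr (phiR σ 0) * Real.exp (?_ / _)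
      · exact phiR_nonneg σ 0
      · nlinarith
  have hpos := mul_pos (FdensReal_pos hσ hsupp y) (Real.exp_pos ((y + R) ^ 2 / (2 * σ ^ 2)))
  simpa [Real.log_mul (FdensReal_pos hσ hsupp _).ne', Real.log_exp]
    using Real.log_le_log hpos hmul

end Convolution

section GaussianMoments

variable {m : ℝ} {v : ℝ≥0}

lemma integrable_pow_gaussianReal (n : ℕ) : Integrable (fun t => t ^ n) (gaussianReal m v) :=
  (memLp_id_gaussianReal (μ := m) (v := v) n).integrable_norm_pow' |>.mono' (by fun_prop)
    (ae_of_all _ fun t => by simp)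

lemma integral_sq_gaussianReal : ∫ t, t ^ 2 ∂gaussianReal 0 v = v := by
  have h := variance_fun_id_gaussianReal (μ := 0) (v := v)
  rw [variance_eq_integral measurable_id'.aemeasurable, integral_id_gaussianReal] at h
  simpa using h

lemma integral_pow_three_gaussianReal : ∫ t, t ^ 3 ∂gaussianReal 0 v = 0 := by
  have h := integral_map (μ := gaussianReal 0 v) measurable_neg.aemeasurable
    (f := fun t : ℝ => t ^ 3) (by fun_prop)
  rw [gaussianReal_map_neg, neg_zero] at h
  simp only [Odd.neg_pow (by decide : Odd 3), integral_neg] at h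
  linarith

lemma integral_cubic_gaussianReal (c₁ c₂ c₃ : ℝ) :
    ∫ t, (c₁ * t + c₂ * t ^ 2 + c₃ * t ^ 3) ∂gaussianReal 0 v = c₂ * v := by
  have h1 := (integrable_pow_gaussianReal (m := 0) (v := v) 1).const_mul c₁
  have h2 := (integrable_pow_gaussianReal (m := 0) (v := v) 2).const_mul c₂
  have h3 := (integrable_pow_gaussianReal (m := 0) (v := v) 3).const_mul c₃
  simp only [pow_one] at h1
  rw [integral_add (f := fun t => c₁ * t + c₂ * t ^ 2) (h1.add h2) h3, integral_add h1 h2,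
    integral_const_mul, integral_const_mul, integral_const_mul, integral_id_gaussianReal,
    integral_sq_gaussianReal, integral_pow_three_gaussianReal]
  ring

lemma integrable_mul_of_abs_le_add_sq {g : ℝ → ℝ} (hg : AEStronglyMeasurable g (gaussianReal m v))
    {a b : ℝ} (hbound : ∀ t, |g t| ≤ a + b * t ^ 2) :
    Integrable (fun t => t * g t) (gaussianReal m v) := by
  have hdom := ((integrable_pow_gaussianReal (m := m) (v := v) 1).norm.const_mul a).add
    ((integrable_pow_gaussianReal (m := m) (v := v) 3).norm.const_mul b)
  refine hdom.mono' (aestronglyMeasurable_id.mul hg) (ae_of_all _ fun t => ?_)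
  calc ‖t * g t‖ = |t| * |g t| := by rw [norm_mul, Real.norm_eq_abs, Real.norm_eq_abs]
    _ ≤ |t| * (a + b * t ^ 2) := mul_le_mul_of_nonneg_left (hbound t) (abs_nonneg t)
    _ = a * ‖t ^ 1‖ + b * ‖t ^ 3‖ := by
      simp only [Real.norm_eq_abs, abs_pow, pow_one, ← sq_abs t]; ring

lemma neg_le_integral_mul_comp_add_of_monotone {L : ℝ → ℝ} {a τ : ℝ}
    (hL : Monotone fun y => L y + (y + a) ^ 2 / (2 * τ)) (B : ℝ)
    (hint : Integrable (fun t => t * L (B + t)) (gaussianReal 0 v)) :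
    -((B + a) * v / τ) ≤ ∫ t, t * L (B + t) ∂gaussianReal 0 v := by
  have hpt : ∀ t, L B * t + -((B + a) / τ) * t ^ 2 + -(1 / (2 * τ)) * t ^ 3 ≤ t * L (B + t) := by
    intro t
    have : 0 ≤ t * ((L (B + t) + (B + t + a) ^ 2 / (2 * τ)) - (L B + (B + a) ^ 2 / (2 * τ))) := by
      rcases le_total 0 t with ht | ht
      · exact mul_nonneg ht (sub_nonneg.2 (hL (by linarith)))
      · exact mul_nonneg_of_nonpos_of_nonpos ht (sub_nonpos.2 (hL (by linarith)))
    linear_combination this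
  have hcubic : Integrable (fun t => L B * t + -((B + a) / τ) * t ^ 2 + -(1 / (2 * τ)) * t ^ 3)
      (gaussianReal 0 v) := by
    have h1 := integrable_pow_gaussianReal (m := 0) (v := v) 1
    simp only [pow_one] at h1
    exact ((h1.const_mul _).add ((integrable_pow_gaussianReal 2).const_mul _)).add
      ((integrable_pow_gaussianReal 3).const_mul _)
  calc -((B + a) * v / τ)
      = ∫ t, (L B * t + -((B + a) / τ) * t ^ 2 + -(1 / (2 * τ)) * t ^ 3) ∂gaussianReal 0 v := by
        rw [integral_cubic_gaussianReal]; ring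
    _ ≤ _ := integral_mono hcubic hint hpt

end GaussianMoments

section LogConvolution

variable {σ R : ℝ} {μ : Measure ℝ} [IsProbabilityMeasure μ] {v : ℝ≥0}

lemma integrable_mul_log_FdensReal (hσ : σ ≠ 0) (hR : 0 ≤ R) (hsupp : ∀ᵐ x ∂μ, |x| ≤ R)
    (m B : ℝ) :
    Integrable (fun t => t * Real.log (FdensReal σ μ (B + t))) (gaussianReal m v) := by
  set L := fun y => Real.log (FdensReal σ μ y)
  have hmeas : Measurable L := by
    have := ((monotone_log_FdensReal_add_sq hσ hsupp).measurable).sub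
      (by fun_prop : Measurable fun y : ℝ => (y + R) ^ 2 / (2 * σ ^ 2))
    convert this using 1
    ext y
    simp [L]
  refine integrable_mul_of_abs_le_add_sq (hmeas.comp (measurable_const_add B)).aestronglyMeasurable
    (a := |Real.log (phiR σ 0)| + (|B| + R) ^ 2 / σ ^ 2) (b := (σ ^ 2)⁻¹) fun t => ?_
  have hsq : (|B + t| + R) ^ 2 ≤ 2 * (|B| + R) ^ 2 + 2 * t ^ 2 := by
    nlinarith [abs_add_le B t, abs_nonneg (B + t), sq_abs t, sq_nonneg (|B| + R - |t|)]
  calc |L (B + t)| ≤ |Real.log (phiR σ 0)| + (|B + t| + R) ^ 2 / (2 * σ ^ 2) :=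
        abs_log_FdensReal_le hσ hsupp _
    _ ≤ |Real.log (phiR σ 0)| + (2 * (|B| + R) ^ 2 + 2 * t ^ 2) / (2 * σ ^ 2) := by gcongr
    _ = _ := by field_simp; ring

lemma neg_le_integral_mul_log_FdensReal (hσ : σ ≠ 0) (hR : 0 ≤ R) (hsupp : ∀ᵐ x ∂μ, |x| ≤ R)
    (B : ℝ) :
    -((B + R) * v / σ ^ 2) ≤ ∫ t, t * Real.log (FdensReal σ μ (B + t)) ∂gaussianReal 0 v :=
  neg_le_integral_mul_comp_add_of_monotone (L := fun y => Real.log (FdensReal σ μ y))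
    (monotone_log_FdensReal_add_sq hσ hsupp) B (integrable_mul_log_FdensReal hσ hR hsupp 0 B)

end LogConvolution

lemma phiR_sqrt_eq_gaussianPDFReal {v : ℝ} (hv : 0 ≤ v) :
    phiR (Real.sqrt v) = gaussianPDFReal 0 v.toNNReal := by
  ext t
  simp [phiR, gaussianPDFReal, Real.sq_sqrt hv, Real.coe_toNNReal _ hv]

lemma integral_mul_phiR_sqrt {v : ℝ} (hv : 0 < v) (f : ℝ → ℝ) :
    ∫ t, f t * phiR (Real.sqrt v) t = ∫ t, f t ∂gaussianReal 0 v.toNNReal := by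
  rw [integral_gaussianReal_eq_integral_smul (by simpa using hv),
    phiR_sqrt_eq_gaussianPDFReal hv.le]
  simp_rw [smul_eq_mul, mul_comm]

section Hbreve

variable {σ1 σ2 R : ℝ} {μ : Measure ℝ} [IsProbabilityMeasure μ]

lemma hbreve_ofReal (hσ2 : σ2 ≠ 0) (hv : σ1 ^ 2 < σ2 ^ 2) (hsupp : ∀ᵐ x ∂μ, |x| ≤ R) (B : ℝ) :
    hbreve σ1 σ2 μ B =
      ↑(σ1 ^ 2 * FdensReal σ1 μ B *
          (∫ t, t * Real.log (FdensReal σ2 μ (B + t)) ∂gaussianReal 0 (σ2 ^ 2 - σ1 ^ 2).toNNReal) /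
          (σ2 ^ 2 - σ1 ^ 2)
        - ∫ x, x * phiR σ1 (B - x) ∂μ + B * FdensReal σ1 μ B) := by
  have hN : ∀ t : ℝ, (t : ℂ) * Complex.log (Fdens σ2 μ (B + t)) *
      (phiR (Real.sqrt (σ2 ^ 2 - σ1 ^ 2)) t : ℂ) =
        ↑(t * Real.log (FdensReal σ2 μ (B + t)) * phiR (Real.sqrt (σ2 ^ 2 - σ1 ^ 2)) t) := by
    intro t
    rw [← Complex.ofReal_add, Fdens_ofReal,
      ← Complex.ofReal_log (FdensReal_pos hσ2 hsupp _).le]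
    push_cast; ring
  have hX : ∀ x : ℝ, (x : ℂ) * phiC σ1 (B - x) = ↑(x * phiR σ1 (B - x)) := by
    intro x
    rw [← Complex.ofReal_sub, phiC_ofReal]
    push_cast; ring
  rw [hbreve]
  simp_rw [hN, hX, Fdens_ofReal, integral_complex_ofReal,
    integral_mul_phiR_sqrt (sub_pos.2 hv)]
  push_cast; ring

lemma mul_phiR_le_integral_sub_mul_phiR (hsupp : ∀ᵐ x ∂μ, |x| ≤ R) {σ a : ℝ} (ha : R ≤ a)
    (b : ℝ) : (a - R) * phiR σ (|b| + R) ≤ ∫ x, (a - x) * phiR σ (b - x) ∂μ := by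
  have hint : Integrable (fun x => (a - x) * phiR σ (b - x)) μ :=
    (((integrable_phiR_sub σ b).const_mul a).sub (integrable_mul_phiR_sub hsupp σ b)).congr
      (ae_of_all _ fun x => by simp only [Pi.sub_apply]; ring)
  calc (a - R) * phiR σ (|b| + R) = ∫ _, (a - R) * phiR σ (|b| + R) ∂μ := by simp
    _ ≤ _ := integral_mono_ae (integrable_const _) hint <| by
      filter_upwards [hsupp] with x hx
      have hxR : x ≤ R := (le_abs_self x).trans hx
      exact mul_le_mul (by linarith) (phiR_add_le_phiR_sub hx b) (phiR_nonneg σ _)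
        (by linarith)

lemma le_norm_hbreve_ofReal (hσ1 : 0 < σ1) (hσ12 : σ1 < σ2) (hR : 0 ≤ R)
    (hsupp : ∀ᵐ x ∂μ, |x| ≤ R) {B : ℝ}
    (hc : 0 ≤ (1 - σ1 ^ 2 / σ2 ^ 2) * B - (1 + σ1 ^ 2 / σ2 ^ 2) * R) :
    ((1 - σ1 ^ 2 / σ2 ^ 2) * B - (1 + σ1 ^ 2 / σ2 ^ 2) * R) * phiR σ1 (|B| + R) ≤
      ‖hbreve σ1 σ2 μ B‖ := by
  have hσ2 : 0 < σ2 := hσ1.trans hσ12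
  have hv : σ1 ^ 2 < σ2 ^ 2 := by gcongr
  set F := FdensReal σ1 μ B
  set I := ∫ t, t * Real.log (FdensReal σ2 μ (B + t)) ∂gaussianReal 0 (σ2 ^ 2 - σ1 ^ 2).toNNReal
  set J := ∫ x, x * phiR σ1 (B - x) ∂μ
  set a := B - σ1 ^ 2 * (B + R) / σ2 ^ 2
  have ha : (1 - σ1 ^ 2 / σ2 ^ 2) * B - (1 + σ1 ^ 2 / σ2 ^ 2) * R = a - R := by
    simp only [a]; ring
  have hI : -((B + R) * (σ2 ^ 2 - σ1 ^ 2) / σ2 ^ 2) ≤ I := by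
    have h := neg_le_integral_mul_log_FdensReal (v := (σ2 ^ 2 - σ1 ^ 2).toNNReal) hσ2.ne' hR hsupp B
    rwa [Real.coe_toNNReal _ (sub_nonneg.2 hv.le)] at h
  have hF : 0 ≤ F := integral_nonneg fun x => phiR_nonneg σ1 _
  have hterm : σ1 ^ 2 * F * -((B + R) * (σ2 ^ 2 - σ1 ^ 2) / σ2 ^ 2) / (σ2 ^ 2 - σ1 ^ 2) ≤
      σ1 ^ 2 * F * I / (σ2 ^ 2 - σ1 ^ 2) := by
    gcongr
  have haF : a * F - J = ∫ x, (a - x) * phiR σ1 (B - x) ∂μ := by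
    simp_rw [sub_mul]
    rw [integral_sub ((integrable_phiR_sub σ1 B).const_mul a) (integrable_mul_phiR_sub hsupp σ1 B),
      integral_const_mul]
    rfl
  rw [hbreve_ofReal hσ2.ne' hv hsupp, Complex.norm_real, Real.norm_eq_abs]
  refine le_trans ?_ (le_abs_self _)
  calc _ = (a - R) * phiR σ1 (|B| + R) := by rw [ha]
    _ ≤ a * F - J := haF ▸ mul_phiR_le_integral_sub_mul_phiR hsupp (by linarith) B
    _ ≤ _ := by
      have : σ1 ^ 2 * F * -((B + R) * (σ2 ^ 2 - σ1 ^ 2) / σ2 ^ 2) / (σ2 ^ 2 - σ1 ^ 2) =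
          (a - B) * F := by
        have : σ2 ^ 2 - σ1 ^ 2 ≠ 0 := (sub_pos.2 hv).ne'
        simp only [a]; field_simp; ring
      linarith

end Hbreve

theorem hbreve_max_modulus_lower_bound_general
    (σ1 σ2 R : ℝ) (hσ1 : 0 < σ1) (hσ12 : σ1 < σ2) (hR : 0 < R)
    (μ : Measure ℝ) (hprob : IsProbabilityMeasure μ)
    (hsupp : ∀ᵐ x ∂μ, |x| ≤ R)
    (B : ℝ) (hB : R * (σ2 ^ 2 + σ1 ^ 2) / (σ2 ^ 2 - σ1 ^ 2) ≤ B) :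
    (∃ z : ℂ, ‖z‖ ≤ B ∧
      ((1 - σ1 ^ 2 / σ2 ^ 2) * B - (1 + σ1 ^ 2 / σ2 ^ 2) * R) *
          (Real.exp (-(B + R) ^ 2 / (2 * σ1 ^ 2)) / Real.sqrt (2 * π * σ1 ^ 2)) ≤
        ‖hbreve σ1 σ2 μ z‖) ∧
    (R * (σ2 ^ 2 + σ1 ^ 2) / (σ2 ^ 2 - σ1 ^ 2) < B →
      ∃ z : ℂ, ‖z‖ ≤ B ∧ 0 < ‖hbreve σ1 σ2 μ z‖) := by
  have hσ2 : 0 < σ2 := hσ1.trans hσ12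
  have hv : 0 < σ2 ^ 2 - σ1 ^ 2 := sub_pos.2 (by gcongr)
  have hB0 : 0 ≤ B := le_trans (div_nonneg (by positivity) hv.le) hB
  have hcoef : (1 - σ1 ^ 2 / σ2 ^ 2) * B - (1 + σ1 ^ 2 / σ2 ^ 2) * R =
      (B * (σ2 ^ 2 - σ1 ^ 2) - R * (σ2 ^ 2 + σ1 ^ 2)) / σ2 ^ 2 := by
    field_simp
  have hnormB : ‖(B : ℂ)‖ ≤ B := by rw [Complex.norm_real, Real.norm_of_nonneg hB0]
  have hphi : phiR σ1 (B + R) =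
      Real.exp (-(B + R) ^ 2 / (2 * σ1 ^ 2)) / Real.sqrt (2 * π * σ1 ^ 2) := by
    rw [phiR, inv_mul_eq_div]
  have key := le_norm_hbreve_ofReal (μ := μ) hσ1 hσ12 hR.le hsupp (B := B)
    (by rw [hcoef]; exact div_nonneg (by linarith [(div_le_iff₀ hv).1 hB]) (by positivity))
  rw [abs_of_nonneg hB0, hphi] at key
  refine ⟨⟨B, hnormB, key⟩, fun hlt => ⟨B, hnormB, lt_of_lt_of_le ?_ key⟩⟩
  rw [hcoef]
  have := (div_lt_iff₀ hv).1 hlt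
  exact mul_pos (div_pos (by linarith) (by positivity)) (div_pos (Real.exp_pos _) (by positivity))

/-- Lower bound on the maximum modulus of `h̆` on the disk `|z| ≤ B`,
for every `B ≥ R(σ2²+σ1²)/(σ2²−σ1²)`; in particular the maximum modulus is strictly
positive whenever `B > R(σ2²+σ1²)/(σ2²−σ1²)`. -/
theorem hbreve_max_modulus_lower_bound
    (σ1 σ2 R : ℝ) (hσ1 : 0 < σ1) (hσ12 : σ1 < σ2) (hR : 0 < R)
    (μ : Measure ℝ) (hprob : IsProbabilityMeasure μ)
    (hsupp : ∀ᵐ x ∂μ, |x| ≤ R) (hmean : ∫ x, x ∂μ = 0)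
    (B : ℝ) (hB : R * (σ2 ^ 2 + σ1 ^ 2) / (σ2 ^ 2 - σ1 ^ 2) ≤ B) :
    (∃ z : ℂ, ‖z‖ ≤ B ∧
      ((1 - σ1 ^ 2 / σ2 ^ 2) * B - (1 + σ1 ^ 2 / σ2 ^ 2) * R) *
          (Real.exp (-(B + R) ^ 2 / (2 * σ1 ^ 2)) / Real.sqrt (2 * π * σ1 ^ 2)) ≤
        ‖hbreve σ1 σ2 μ z‖) ∧
    (R * (σ2 ^ 2 + σ1 ^ 2) / (σ2 ^ 2 - σ1 ^ 2) < B →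
      ∃ z : ℂ, ‖z‖ ≤ B ∧ 0 < ‖hbreve σ1 σ2 μ z‖) :=
  hbreve_max_modulus_lower_bound_general σ1 σ2 R hσ1 hσ12 hR μ hprob hsupp B hB
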